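/- For any real m×n matrix A there exist infinitely many q ∈ ℤⁿ such that ‖Aq‖_ℤ < |q|^{-n/m}, where ‖Aq‖_ℤ = max_i (distance of (Aq)_i to nearest integer) and |q| is the sup norm. -/

import Mathlib

/-!
Dirichlet's theorem, by pigeonhole: split `[0,1)^m` into `Q^m` cubes of side `1/Q`; the
`(N+1)^n > Q^m` vectors `A v` with `v ∈ {0,…,N}ⁿ`, `N = ⌊Q^{m/n}⌋`, have two fractional parts in the
same cube, and the difference `q` of the corresponding `v` has `|q| ≤ Q^{m/n}` and `‖Aq‖_ℤ < 1/Q`,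
hence `‖Aq‖_ℤ < |q|^{-n/m}`. Thus solutions with arbitrarily small `‖Aq‖_ℤ` exist. If there were
only finitely many, the one minimising `‖Aq‖_ℤ` would have `‖Aq‖_ℤ = 0`, and then all its nonzero
integer multiples would be solutions.
-/

noncomputable def distZ (x : ℝ) : ℝ := |x - round x|

open Matrix

lemma distZ_nonneg (x : ℝ) : 0 ≤ distZ x := abs_nonneg _

lemma distZ_le_abs_sub_intCast (x : ℝ) (k : ℤ) : distZ x ≤ |x - k| := round_le x k

lemma distZ_eq_zero_iff {x : ℝ} : distZ x = 0 ↔ ∃ k : ℤ, x = k := by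
  refine ⟨fun h => ⟨round x, sub_eq_zero.1 (abs_eq_zero.1 h)⟩, ?_⟩
  rintro ⟨k, rfl⟩
  simp [distZ]

lemma distZ_intCast_mul_eq_zero {x : ℝ} (hx : distZ x = 0) (k : ℤ) : distZ (k * x) = 0 := by
  obtain ⟨l, rfl⟩ := distZ_eq_zero_iff.1 hx
  exact distZ_eq_zero_iff.2 ⟨k * l, by push_cast; rfl⟩

lemma distZ_sub_lt_of_floor_fract_mul_eq {Q x y : ℝ} (hQ : 0 < Q)
    (h : ⌊Int.fract x * Q⌋ = ⌊Int.fract y * Q⌋) : distZ (x - y) < 1 / Q := by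
  have hfract : |Int.fract x - Int.fract y| < 1 / Q := by
    have := Int.abs_sub_lt_one_of_floor_eq_floor h
    rwa [← sub_mul, abs_mul, abs_of_pos hQ, ← lt_div_iff₀ hQ] at this
  calc distZ (x - y) ≤ |x - y - ((⌊x⌋ - ⌊y⌋ : ℤ) : ℝ)| := distZ_le_abs_sub_intCast _ _
    _ = |Int.fract x - Int.fract y| := by rw [Int.fract, Int.fract]; push_cast; ring_nf
    _ < 1 / Q := hfract

theorem exists_ne_forall_distZ_sub_lt {α κ : Type*} [Fintype α] [Fintype κ] (f : α → κ → ℝ)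
    {Q : ℕ} (hQ : 0 < Q) (hcard : Q ^ Fintype.card κ < Fintype.card α) :
    ∃ a b, a ≠ b ∧ ∀ i, distZ (f a i - f b i) < 1 / Q := by
  classical
  have hQ' : (0 : ℝ) < Q := Nat.cast_pos.2 hQ
  have hbox : Set.MapsTo (fun a i => ⌊Int.fract (f a i) * Q⌋) (Finset.univ : Finset α)
      (Fintype.piFinset fun _ : κ => Finset.Ico (0 : ℤ) Q) := by
    intro a _
    simp only [Fintype.coe_piFinset, Set.mem_pi, Set.mem_univ, Finset.coe_Ico,
      Set.mem_Ico, forall_const]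
    intro i
    refine ⟨Int.floor_nonneg.2 (mul_nonneg (Int.fract_nonneg _) hQ'.le), Int.floor_lt.2 ?_⟩
    push_cast
    exact mul_lt_of_lt_one_left hQ' (Int.fract_lt_one _)
  obtain ⟨a, -, b, -, hab, h⟩ :=
    Finset.exists_ne_map_eq_of_card_lt_of_maps_to (by simpa using hcard) hbox
  exact ⟨a, b, hab, fun i => distZ_sub_lt_of_floor_fract_mul_eq hQ' (congrFun h i)⟩

theorem exists_ne_zero_abs_le_forall_distZ_mulVec_lt {m n : ℕ} (hn : n ≠ 0)
    (A : Matrix (Fin m) (Fin n) ℝ) {Q : ℕ} (hQ : 0 < Q) :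
    ∃ q : Fin n → ℤ, q ≠ 0 ∧ (∀ j, |(q j : ℝ)| ≤ (Q : ℝ) ^ ((m : ℝ) / n)) ∧
      ∀ i, distZ ((A *ᵥ (Int.cast ∘ q)) i) < 1 / Q := by
  set N := ⌊(Q : ℝ) ^ ((m : ℝ) / n)⌋₊
  have hcard : Q ^ m < (N + 1) ^ n := by
    have hpow : ((Q : ℝ) ^ ((m : ℝ) / n)) ^ n = (Q : ℝ) ^ m := by
      rw [← Real.rpow_mul_natCast (by positivity), div_mul_cancel₀ _ (Nat.cast_ne_zero.2 hn),
        Real.rpow_natCast]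
    have := pow_lt_pow_left₀ (Nat.lt_floor_add_one ((Q : ℝ) ^ ((m : ℝ) / n))) (by positivity) hn
    rw [hpow] at this
    exact_mod_cast this
  obtain ⟨v, w, hvw, hlt⟩ := exists_ne_forall_distZ_sub_lt
    (fun v : Fin n → Fin (N + 1) => A *ᵥ fun j => ((v j : ℕ) : ℝ)) hQ (by simpa using hcard)
  have hq : (Int.cast ∘ fun j => ((v j : ℕ) : ℤ) - (w j : ℕ) : Fin n → ℝ)
      = (fun j => ((v j : ℕ) : ℝ)) - fun j => ((w j : ℕ) : ℝ) := by
    funext j; simp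
  refine ⟨fun j => ((v j : ℕ) : ℤ) - (w j : ℕ), fun h => hvw ?_, fun j => ?_, fun i => ?_⟩
  · funext j
    exact Fin.ext (by simpa [sub_eq_zero] using congrFun h j)
  · calc |((((v j : ℕ) : ℤ) - (w j : ℕ) : ℤ) : ℝ)| ≤ N := by
          push_cast
          exact abs_sub_le_of_nonneg_of_le (by positivity) (by exact_mod_cast (v j).is_le)
            (by positivity) (by exact_mod_cast (w j).is_le)
      _ ≤ (Q : ℝ) ^ ((m : ℝ) / n) := Nat.floor_le (by positivity)
  · rw [hq, mulVec_sub]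
    exact hlt i

lemma Real.inv_le_rpow_neg_inv_of_le_rpow {x y a : ℝ} (hx : 0 < x) (hy : 0 ≤ y) (ha : 0 < a)
    (h : x ≤ y ^ a) : y⁻¹ ≤ x ^ (-a⁻¹) := by
  rw [Real.rpow_neg hx.le]
  exact inv_anti₀ (Real.rpow_pos_of_pos hx _) ((Real.rpow_inv_le_iff_of_pos hx.le hy ha).2 h)

lemma one_le_iSup_abs_of_ne_zero {ι : Type*} [Finite ι] {q : ι → ℤ} (hq : q ≠ 0) :
    1 ≤ ⨆ j, |(q j : ℝ)| := by
  obtain ⟨j, hj⟩ := Function.ne_iff.1 hq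
  exact le_ciSup_of_le (Set.finite_range _).bddAbove j (by exact_mod_cast Int.one_le_abs hj)

noncomputable def supDistZ {ι : Type*} (x : ι → ℝ) : ℝ := ⨆ i, distZ (x i)

section supDistZ

variable {ι : Type*}

lemma supDistZ_nonneg (x : ι → ℝ) : 0 ≤ supDistZ x :=
  Real.iSup_nonneg fun i => distZ_nonneg (x i)

variable [Finite ι]

lemma distZ_le_supDistZ (x : ι → ℝ) (i : ι) : distZ (x i) ≤ supDistZ x :=
  le_ciSup (f := fun i => distZ (x i)) (Set.finite_range _).bddAbove i

lemma supDistZ_lt_iff [Nonempty ι] {x : ι → ℝ} {c : ℝ} :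
    supDistZ x < c ↔ ∀ i, distZ (x i) < c := by
  refine ⟨fun h i => (distZ_le_supDistZ x i).trans_lt h, fun h => ?_⟩
  obtain ⟨i, hi⟩ := exists_eq_ciSup_of_finite (f := fun i => distZ (x i))
  rw [supDistZ, ← hi]
  exact h i

lemma supDistZ_eq_zero_iff {x : ι → ℝ} : supDistZ x = 0 ↔ ∀ i, distZ (x i) = 0 := by
  refine ⟨fun h i => le_antisymm (h ▸ distZ_le_supDistZ x i) (distZ_nonneg _), fun h => ?_⟩
  simp only [supDistZ, h, Real.iSup_const_zero]

end supDistZ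

section dirichletSet

variable {m n : ℕ} (A : Matrix (Fin m) (Fin n) ℝ)

def dirichletSet : Set (Fin n → ℤ) :=
  {q | supDistZ (A *ᵥ (Int.cast ∘ q)) < (⨆ j, |(q j : ℝ)|) ^ (-(n : ℝ) / m)}

lemma ne_zero_of_mem_dirichletSet (hm : m ≠ 0) (hn : n ≠ 0) {q : Fin n → ℤ}
    (hq : q ∈ dirichletSet A) : q ≠ 0 := by
  rintro rfl
  have hexp : -(n : ℝ) / m ≠ 0 :=
    div_ne_zero (neg_ne_zero.2 (Nat.cast_ne_zero.2 hn)) (Nat.cast_ne_zero.2 hm)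
  simp only [dirichletSet, Set.mem_ofPred_eq, Pi.zero_apply, Int.cast_zero, abs_zero,
    Real.iSup_const_zero, Real.zero_rpow hexp] at hq
  exact (supDistZ_nonneg _).not_gt hq

lemma dirichletSet_infinite_of_supDistZ_eq_zero {q : Fin n → ℤ} (hq : q ≠ 0)
    (h : supDistZ (A *ᵥ (Int.cast ∘ q)) = 0) : (dirichletSet A).Infinite := by
  have hmem : ∀ k : ℤ, k ≠ 0 → k • q ∈ dirichletSet A := by
    intro k hk
    have hkq : (Int.cast ∘ (k • q) : Fin n → ℝ) = (k : ℝ) • (Int.cast ∘ q) := by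
      funext j; simp
    have h0 : supDistZ (A *ᵥ (Int.cast ∘ (k • q))) = 0 := by
      rw [hkq, mulVec_smul, supDistZ_eq_zero_iff]
      exact fun i => distZ_intCast_mul_eq_zero (supDistZ_eq_zero_iff.1 h i) k
    show supDistZ _ < _
    rw [h0]
    exact Real.rpow_pos_of_pos
      (zero_lt_one.trans_le (one_le_iSup_abs_of_ne_zero (smul_ne_zero hk hq))) _
  refine Set.infinite_of_injective_forall_mem (f := fun k : ℕ => ((k : ℤ) + 1) • q)
    (fun k l hkl => ?_) (fun k => hmem _ (by omega))
  have := smul_left_injective ℤ hq hkl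
  omega

lemma exists_mem_dirichletSet_supDistZ_lt (hm : m ≠ 0) (hn : n ≠ 0) {ε : ℝ} (hε : 0 < ε) :
    ∃ q ∈ dirichletSet A, supDistZ (A *ᵥ (Int.cast ∘ q)) < ε := by
  have : Nonempty (Fin m) := ⟨⟨0, Nat.pos_of_ne_zero hm⟩⟩
  have : Nonempty (Fin n) := ⟨⟨0, Nat.pos_of_ne_zero hn⟩⟩
  obtain ⟨Q, hQ⟩ := exists_nat_one_div_lt hε
  obtain ⟨q, hq0, hqle, hqlt⟩ := exists_ne_zero_abs_le_forall_distZ_mulVec_lt hn A Q.succ_pos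
  have hsup : supDistZ (A *ᵥ (Int.cast ∘ q)) < 1 / (Q + 1 : ℕ) := supDistZ_lt_iff.2 hqlt
  refine ⟨q, hsup.trans_le ?_, hsup.trans (by exact_mod_cast hQ)⟩
  rw [one_div, show -(n : ℝ) / m = -((m : ℝ) / n)⁻¹ by rw [inv_div, neg_div]]
  exact Real.inv_le_rpow_neg_inv_of_le_rpow
    (zero_lt_one.trans_le (one_le_iSup_abs_of_ne_zero hq0)) (by positivity)
    (by positivity) (ciSup_le hqle)

end dirichletSet

/-- Corollary of Dirichlet's theorem: for any real `m × n` matrix `A` there are infinitely many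
`q ∈ ℤⁿ` with `‖Aq‖_ℤ < |q|^{-n/m}`. -/
theorem dirichlet_corollary (m n : ℕ) (hm : 0 < m) (hn : 0 < n)
    (A : Matrix (Fin m) (Fin n) ℝ) :
    {q : Fin n → ℤ |
      (⨆ i, distZ (∑ j, A i j * (q j : ℝ))) < (⨆ j, |(q j : ℝ)|) ^ (-(n : ℝ) / m)}.Infinite := by
  change (dirichletSet A).Infinite
  intro hfin
  obtain ⟨q₁, hq₁, -⟩ := exists_mem_dirichletSet_supDistZ_lt A hm.ne' hn.ne' one_pos
  obtain ⟨q₀, hq₀, hmin⟩ :=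
    Set.exists_min_image _ (fun q => supDistZ (A *ᵥ (Int.cast ∘ q))) hfin ⟨q₁, hq₁⟩
  rcases (supDistZ_nonneg _).eq_or_lt with h0 | hpos
  · exact dirichletSet_infinite_of_supDistZ_eq_zero A
      (ne_zero_of_mem_dirichletSet A hm.ne' hn.ne' hq₀) h0.symm hfin
  · obtain ⟨q, hq, hlt⟩ := exists_mem_dirichletSet_supDistZ_lt A hm.ne' hn.ne' hpos
    exact (hmin q hq).not_gt hlt
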